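/- Let G be an acyclic grade graph and let γ, γ' be grade contexts. If γ + γ'·G ≤ γ' (pointwise), then γ·G* ≤ γ' (pointwise). -/

import Mathlib

open scoped Classical

/-- Weight of a path (nonempty list of vertices) in a grade graph. -/
def pathWeight {V R : Type*} [Semiring R] (G : V → V → R) : List V → R
  | [] => 1
  | [_] => 1
  | x :: y :: p => G x y * pathWeight G (y :: p)

/-- The set of non-source nodes of a grade graph. -/
def Nodes {V R : Type*} [Zero R] (G : V → V → R) : Set V := {y | ∃ x, G x y ≠ 0}

/-- Paths from `x` to `y`: nonempty lists with head `x` and last element `y`. -/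
def PathsBtw {V : Type*} (x y : V) : Set (List V) :=
  {p | p ≠ [] ∧ p.head? = some x ∧ p.getLast? = some y}

/-- A cycle: a path with more than one node and equal endpoints. -/
def IsCyclePath {V : Type*} (p : List V) : Prop := 1 < p.length ∧ p.head? = p.getLast?

/-- A grade graph is acyclic if every cycle has weight zero. -/
def Acyclic {V R : Type*} [Semiring R] (G : V → V → R) : Prop :=
  ∀ p : List V, IsCyclePath p → pathWeight G p = 0

/-- Reflexive and transitive closure of a grade graph:
`G*(x,y) = Σ_{p ∈ Paths(x,y)} w_G(p)`. -/
noncomputable def gstar {V R : Type*} [Semiring R] (G : V → V → R) (x y : V) : R :=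
  ∑ᶠ p ∈ PathsBtw x y, pathWeight G p

/-- Grade matrix multiplication. -/
noncomputable def matMul {V R : Type*} [Semiring R] (M₁ M₂ : V → V → R) (x y : V) : R :=
  ∑ᶠ z, M₁ x z * M₂ z y

/-- Identity grade matrix. -/
noncomputable def matId {V R : Type*} [Semiring R] (x y : V) : R := if x = y then 1 else 0

/-- `n`-fold product of a grade graph with itself, with `G⁰ = I`. -/
noncomputable def matPow {V R : Type*} [Semiring R] (G : V → V → R) : ℕ → V → V → R
  | 0 => matId
  | n + 1 => matMul G (matPow G n)

/-- Multiplication of a grade context by a grade matrix: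
`(γ·M)(x) = Σ_y γ(y)·M(y,x)`. -/
noncomputable def ctxMul {V R : Type*} [Semiring R] (γ : V → R) (M : V → V → R) (x : V) : R :=
  ∑ᶠ y, γ y * M y x

/-- A grade matrix: every row has finite support. -/
def RowFinite {V R : Type*} [Zero R] (M : V → V → R) : Prop :=
  ∀ x, {y | M x y ≠ 0}.Finite

/-!
A cycle of weight zero kills the weight of every path through it, so in an acyclic graph a path
of nonzero weight repeats no vertex; after its first vertex it visits only targets of edges, so
it has at most `N = |Nodes G|` edges. Hence `G* = ∑_{n ≤ N} Gⁿ` and `G^(N+1) = 0`. Unfolding the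
prefixed point `k` times gives `γ·(∑_{n<k} Gⁿ) + γ'·Gᵏ ≤ γ'`; the remainder `γ'·Gᵏ` has to be
carried along because elements of `R` need not be nonnegative, and it vanishes at `k = N + 1`.
-/

open Finset Function

section Paths

variable {V R : Type*} [Semiring R] {G : V → V → R}

theorem pathWeight_cons_of_head? {x z : V} {q : List V} (h : q.head? = some z) :
    pathWeight G (x :: q) = G x z * pathWeight G q := by
  obtain ⟨q, rfl⟩ := List.head?_eq_some_iff.1 h
  rfl

theorem pathWeight_append (p : List V) (v : V) (q : List V) :
    pathWeight G (p ++ v :: q) = pathWeight G (p ++ [v]) * pathWeight G (v :: q) := by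
  induction p with
  | nil => simp [pathWeight]
  | cons a p ih =>
    cases p with
    | nil => simp [pathWeight]
    | cons b p => simp only [List.cons_append, pathWeight] at ih ⊢; rw [ih, mul_assoc]

theorem Acyclic.pathWeight_eq_zero_of_not_nodup (hacyc : Acyclic G) {p : List V}
    (hp : ¬ p.Nodup) : pathWeight G p = 0 := by
  induction p with
  | nil => exact absurd List.nodup_nil hp
  | cons a q ih =>
    by_cases ha : a ∈ q
    · obtain ⟨s, t, rfl⟩ := List.append_of_mem ha
      have hcycle : IsCyclePath (a :: s ++ [a]) := ⟨by simp, by rw [List.getLast?_concat]; rfl⟩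
      rw [← List.cons_append, pathWeight_append, hacyc _ hcycle, zero_mul]
    · cases q with
      | nil => exact absurd (List.nodup_singleton a) hp
      | cons b q => rw [pathWeight_cons_of_head? rfl, ih (by simpa [ha] using hp), mul_zero]

theorem mem_nodes_of_pathWeight_cons_ne_zero {x a : V} {q : List V}
    (hw : pathWeight G (x :: q) ≠ 0) (ha : a ∈ q) : a ∈ Nodes G := by
  induction q generalizing x with
  | nil => simp at ha
  | cons b q ih =>
    rw [pathWeight_cons_of_head? rfl] at hw
    rcases List.mem_cons.1 ha with rfl | ha
    · exact ⟨x, left_ne_zero_of_mul hw⟩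
    · exact ih (right_ne_zero_of_mul hw) ha

theorem Acyclic.length_le_ncard_nodes (hacyc : Acyclic G) (hN : (Nodes G).Finite) {x : V}
    {q : List V} (hw : pathWeight G (x :: q) ≠ 0) : q.length ≤ (Nodes G).ncard := by
  have hnd : q.Nodup := (not_not.1 fun h => hw (hacyc.pathWeight_eq_zero_of_not_nodup h)).of_cons
  rw [← List.toFinset_card_of_nodup hnd, ← Set.ncard_coe_finset]
  exact Set.ncard_le_ncard (fun a ha => mem_nodes_of_pathWeight_cons_ne_zero hw
    (List.mem_toFinset.1 ha)) hN

end Paths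

theorem Set.Finite.setOf_list_length_eq {α : Type*} {s : Set α} (hs : s.Finite) (n : ℕ) :
    {l : List α | l.length = n ∧ ∀ a ∈ l, a ∈ s}.Finite := by
  have := hs.to_subtype
  refine ((List.finite_length_eq s n).image (List.map Subtype.val)).subset ?_
  rintro l ⟨hl, hls⟩
  lift l to List s using hls
  exact ⟨l, by simpa using hl, rfl⟩

section Walks

variable {V R : Type*} [Semiring R] {G : V → V → R}

theorem finite_nodes (hG : {q : V × V | G q.1 q.2 ≠ 0}.Finite) : (Nodes G).Finite :=
  (hG.image Prod.snd).subset fun y ⟨x, hxy⟩ => ⟨(x, y), hxy, rfl⟩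

-- `n` counts edges (the paper's `length`), so the lists have `n + 1` vertices.
def pathsOfLength (n : ℕ) (x y : V) : Set (List V) := {p ∈ PathsBtw x y | p.length = n + 1}

theorem head?_of_mem_pathsOfLength {n : ℕ} {x y : V} {p : List V}
    (hp : p ∈ pathsOfLength n x y) : p.head? = some x :=
  hp.1.2.1

theorem pathsOfLength_zero (x y : V) :
    pathsOfLength 0 x y = if x = y then {[x]} else ∅ := by
  ext p
  constructor
  · rintro ⟨⟨-, hx, hy⟩, hlen⟩
    obtain ⟨a, rfl⟩ := List.length_eq_one_iff.1 hlen
    simp_all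
  · split_ifs with h <;> simp_all [pathsOfLength, PathsBtw]

theorem cons_mem_pathsOfLength_succ {n : ℕ} {x x' y : V} {q : List V} :
    x' :: q ∈ pathsOfLength (n + 1) x y ↔ x' = x ∧ ∃ z, q ∈ pathsOfLength n z y := by
  cases q with
  | nil => simp [pathsOfLength, PathsBtw]
  | cons b q => simp [pathsOfLength, PathsBtw, List.getLast?_cons_cons, and_assoc]

theorem finite_pathsOfLength_inter_support (hN : (Nodes G).Finite) (n : ℕ) (x y : V) :
    (pathsOfLength n x y ∩ support (pathWeight G)).Finite := by
  refine ((hN.setOf_list_length_eq n).image (x :: ·)).subset ?_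
  rintro p ⟨hp, hw⟩
  obtain ⟨q, rfl⟩ := List.head?_eq_some_iff.1 (head?_of_mem_pathsOfLength hp)
  exact ⟨q, ⟨by simpa using hp.2, fun a => mem_nodes_of_pathWeight_cons_ne_zero hw⟩, rfl⟩

theorem mem_pathsOfLength_succ_iff {n : ℕ} {x y : V} {p : List V} (hw : pathWeight G p ≠ 0) :
    p ∈ pathsOfLength (n + 1) x y ↔
      ∃ z ∈ Nodes G, ∃ q ∈ pathsOfLength n z y ∩ support (pathWeight G), x :: q = p := by
  constructor
  · intro hp
    obtain ⟨q, rfl⟩ := List.head?_eq_some_iff.1 (head?_of_mem_pathsOfLength hp)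
    obtain ⟨-, z, hq⟩ := cons_mem_pathsOfLength_succ.1 hp
    rw [pathWeight_cons_of_head? (head?_of_mem_pathsOfLength hq)] at hw
    exact ⟨z, ⟨x, left_ne_zero_of_mul hw⟩, q, ⟨hq, right_ne_zero_of_mul hw⟩, rfl⟩
  · rintro ⟨z, -, q, ⟨hq, -⟩, rfl⟩
    exact cons_mem_pathsOfLength_succ.2 ⟨rfl, z, hq⟩

theorem finsum_pathsOfLength_succ (hN : (Nodes G).Finite) (n : ℕ) (x y : V) :
    ∑ᶠ p ∈ pathsOfLength (n + 1) x y, pathWeight G p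
      = ∑ᶠ z, G x z * ∑ᶠ q ∈ pathsOfLength n z y, pathWeight G q := by
  set t : V → Set (List V) := fun z => pathsOfLength n z y ∩ support (pathWeight G)
  have ht (z : V) : (t z).Finite := finite_pathsOfLength_inter_support hN n z y
  have hdisj : (Nodes G).PairwiseDisjoint fun z => (x :: ·) '' t z := by
    intro z _ z' _ hzz'
    refine Set.disjoint_left.2 ?_
    rintro _ ⟨q, hq, rfl⟩ ⟨q', hq', hqq'⟩
    cases List.cons_injective hqq'
    exact hzz' (Option.some_injective _ ((head?_of_mem_pathsOfLength hq.1).symm.trans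
      (head?_of_mem_pathsOfLength hq'.1)))
  have hunion (p : List V) (hw : p ∈ support (pathWeight G)) :
      p ∈ pathsOfLength (n + 1) x y ↔ p ∈ ⋃ z ∈ Nodes G, (x :: ·) '' t z := by
    simpa only [Set.mem_iUnion, Set.mem_image, exists_prop] using mem_pathsOfLength_succ_iff hw
  have hsupp : support (fun z => G x z * ∑ᶠ q ∈ pathsOfLength n z y, pathWeight G q) ⊆ Nodes G :=
    fun z hz => ⟨x, left_ne_zero_of_mul hz⟩
  calc ∑ᶠ p ∈ pathsOfLength (n + 1) x y, pathWeight G p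
      = ∑ᶠ p ∈ ⋃ z ∈ Nodes G, (x :: ·) '' t z, pathWeight G p :=
        finsum_mem_inter_support_eq' _ _ _ hunion
    _ = ∑ᶠ z ∈ Nodes G, ∑ᶠ q ∈ t z, pathWeight G (x :: q) := by
        rw [finsum_mem_biUnion hdisj hN fun z _ => (ht z).image _]
        simp_rw [finsum_mem_image List.cons_injective.injOn]
    _ = ∑ᶠ z ∈ Nodes G, G x z * ∑ᶠ q ∈ pathsOfLength n z y, pathWeight G q := by
        refine finsum_mem_congr rfl fun z _ => ?_
        rw [← finsum_mem_inter_support (pathWeight G), mul_finsum_mem' _ _ (ht z)]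
        exact finsum_mem_congr rfl fun q hq =>
          pathWeight_cons_of_head? (head?_of_mem_pathsOfLength hq.1)
    _ = ∑ᶠ z, G x z * ∑ᶠ q ∈ pathsOfLength n z y, pathWeight G q := by
        rw [finsum_mem_eq_finite_toFinset_sum _ hN,
          finsum_eq_sum_of_support_subset_of_finite _ hsupp hN]

end Walks

section Closure

variable {V R : Type*} [Semiring R] {G : V → V → R}

theorem matPow_eq_finsum_pathsOfLength (hN : (Nodes G).Finite) (n : ℕ) (x y : V) :
    matPow G n x y = ∑ᶠ p ∈ pathsOfLength n x y, pathWeight G p := by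
  induction n generalizing x with
  | zero =>
    rw [pathsOfLength_zero]
    split_ifs with h <;> simp [matPow, matId, h, pathWeight]
  | succ n ih =>
    simp only [matPow, matMul, ih]
    exact (finsum_pathsOfLength_succ hN n x y).symm

theorem Acyclic.matPow_eq_zero (hacyc : Acyclic G) (hN : (Nodes G).Finite) {n : ℕ}
    (hn : (Nodes G).ncard < n) (x y : V) : matPow G n x y = 0 := by
  rw [matPow_eq_finsum_pathsOfLength hN]
  refine finsum_mem_eq_zero_of_forall_eq_zero fun p hp => not_not.1 fun hw => ?_
  obtain ⟨q, rfl⟩ := List.head?_eq_some_iff.1 (head?_of_mem_pathsOfLength hp)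
  have hlen : q.length + 1 = n + 1 := hp.2
  have := hacyc.length_le_ncard_nodes hN hw
  omega

theorem Acyclic.gstar_eq_sum_matPow (hacyc : Acyclic G) (hN : (Nodes G).Finite) :
    gstar G = fun x y => ∑ n ∈ range ((Nodes G).ncard + 1), matPow G n x y := by
  ext x y
  set t : ℕ → Set (List V) := fun n => pathsOfLength n x y ∩ support (pathWeight G)
  have hdisj : (range ((Nodes G).ncard + 1) : Set ℕ).PairwiseDisjoint t := by
    intro m _ n _ hmn
    exact Set.disjoint_left.2 fun p hp hp' => hmn (Nat.succ_injective (hp.1.2.symm.trans hp'.1.2))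
  have hunion (p : List V) (hw : p ∈ support (pathWeight G)) :
      p ∈ PathsBtw x y ↔ p ∈ ⋃ n ∈ (range ((Nodes G).ncard + 1) : Set ℕ), t n := by
    simp only [Set.mem_iUnion, coe_range, Set.mem_Iio]
    constructor
    · intro hp
      obtain ⟨q, rfl⟩ := List.head?_eq_some_iff.1 hp.2.1
      exact ⟨q.length, Nat.lt_succ_of_le (hacyc.length_le_ncard_nodes hN hw), ⟨hp, rfl⟩, hw⟩
    · rintro ⟨n, -, ⟨hp, -⟩, -⟩
      exact hp
  calc gstar G x y = ∑ᶠ p ∈ ⋃ n ∈ (range ((Nodes G).ncard + 1) : Set ℕ), t n, pathWeight G p :=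
        finsum_mem_inter_support_eq' _ _ _ hunion
    _ = ∑ n ∈ range ((Nodes G).ncard + 1), matPow G n x y := by
        rw [finsum_mem_biUnion hdisj (finite_toSet _)
          fun n _ => finite_pathsOfLength_inter_support hN n x y, finsum_mem_coe_finset]
        simp only [t, finsum_mem_inter_support, matPow_eq_finsum_pathsOfLength hN]

end Closure

section Contexts

variable {V R : Type*} [Semiring R] {G : V → V → R} {γ δ : V → R}

theorem ctxMul_eq_sum {s : Finset V} (hs : support γ ⊆ s) (M : V → V → R) (x : V) :
    ctxMul γ M x = ∑ y ∈ s, γ y * M y x :=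
  finsum_eq_sum_of_support_subset _ ((support_mul_subset_left _ _).trans hs)

theorem matMul_eq_sum {s : Finset V} (hs : Nodes G ⊆ s) (M : V → V → R) (x y : V) :
    matMul G M x y = ∑ z ∈ s, G x z * M z y :=
  finsum_eq_sum_of_support_subset _ fun _ hz => hs ⟨x, left_ne_zero_of_mul hz⟩

theorem support_ctxMul_subset_nodes : support (ctxMul γ G) ⊆ Nodes G := by
  intro x hx
  by_contra hxN
  exact hx (finsum_eq_zero_of_forall_eq_zero fun y => by
    rw [not_not.1 fun h => hxN ⟨y, h⟩, mul_zero])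

theorem ctxMul_matId (γ : V → R) (x : V) : ctxMul γ matId x = γ x := by
  rw [ctxMul, finsum_eq_single _ x fun y hy => by simp [matId, hy]]
  simp [matId]

theorem ctxMul_add_left (hγ : (support γ).Finite) (hδ : (support δ).Finite)
    (M : V → V → R) (x : V) : ctxMul (γ + δ) M x = ctxMul γ M x + ctxMul δ M x := by
  have hs := (hγ.union hδ).coe_toFinset.ge
  rw [ctxMul_eq_sum (γ := γ + δ) ((support_add γ δ).trans hs),
    ctxMul_eq_sum (Set.subset_union_left.trans hs), ctxMul_eq_sum (Set.subset_union_right.trans hs),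
    ← sum_add_distrib]
  simp only [Pi.add_apply, add_mul]

theorem ctxMul_matMul (hN : (Nodes G).Finite) (hγ : (support γ).Finite) (M : V → V → R) (x : V) :
    ctxMul γ (matMul G M) x = ctxMul (ctxMul γ G) M x := by
  rw [ctxMul_eq_sum hγ.coe_toFinset.ge,
    ctxMul_eq_sum (support_ctxMul_subset_nodes.trans hN.coe_toFinset.ge)]
  simp only [matMul_eq_sum hN.coe_toFinset.ge, ctxMul_eq_sum hγ.coe_toFinset.ge, mul_sum, sum_mul,
    mul_assoc]
  exact sum_comm

theorem ctxMul_finset_sum {ι : Type*} (hγ : (support γ).Finite) (I : Finset ι)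
    (M : ι → V → V → R) (x : V) :
    ctxMul γ (fun y x => ∑ i ∈ I, M i y x) x = ∑ i ∈ I, ctxMul γ (M i) x := by
  simp only [ctxMul_eq_sum hγ.coe_toFinset.ge, mul_sum]
  exact sum_comm

theorem ctxMul_le_ctxMul_left [PartialOrder R] [IsOrderedAddMonoid R] [MulRightMono R]
    (hγ : (support γ).Finite) (hδ : (support δ).Finite) (h : γ ≤ δ) (M : V → V → R) (x : V) :
    ctxMul γ M x ≤ ctxMul δ M x := by
  have hs := (hγ.union hδ).coe_toFinset.ge
  rw [ctxMul_eq_sum (Set.subset_union_left.trans hs),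
    ctxMul_eq_sum (Set.subset_union_right.trans hs)]
  exact sum_le_sum fun y _ => mul_le_mul_left (h y) _

end Contexts

theorem sum_ctxMul_matPow_add_ctxMul_matPow_le {V R : Type*} [Semiring R] [PartialOrder R]
    [IsOrderedAddMonoid R] [MulRightMono R] {G : V → V → R} (hN : (Nodes G).Finite)
    {γ γ' : V → R} (hγ : (support γ).Finite) (hγ' : (support γ').Finite)
    (h : ∀ x, γ x + ctxMul γ' G x ≤ γ' x) (k : ℕ) (x : V) :
    ∑ n ∈ range k, ctxMul γ (matPow G n) x + ctxMul γ' (matPow G k) x ≤ γ' x := by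
  induction k with
  | zero => simp [matPow, ctxMul_matId]
  | succ k ih =>
    have hγ'G : (support (ctxMul γ' G)).Finite := hN.subset support_ctxMul_subset_nodes
    calc ∑ n ∈ range (k + 1), ctxMul γ (matPow G n) x + ctxMul γ' (matPow G (k + 1)) x
        = ∑ n ∈ range k, ctxMul γ (matPow G n) x
            + ctxMul (γ + ctxMul γ' G) (matPow G k) x := by
          rw [sum_range_succ, add_assoc, matPow, ctxMul_matMul hN hγ', ctxMul_add_left hγ hγ'G]
      _ ≤ ∑ n ∈ range k, ctxMul γ (matPow G n) x + ctxMul γ' (matPow G k) x := by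
          gcongr
          exact ctxMul_le_ctxMul_left (hγ.union hγ'G |>.subset (support_add _ _)) hγ' h _ _
      _ ≤ γ' x := ih

theorem gstar_le_of_prefixed_point_general {V R : Type*} [Semiring R] [PartialOrder R]
    (hadd : ∀ a b c d : R, a ≤ b → c ≤ d → a + c ≤ b + d)
    (hmul : ∀ a b c d : R, a ≤ b → c ≤ d → a * c ≤ b * d)
    (G : V → V → R) (hG : {q : V × V | G q.1 q.2 ≠ 0}.Finite)
    (hacyc : Acyclic G)
    (γ γ' : V → R) (hγ : {x | γ x ≠ 0}.Finite) (hγ' : {x | γ' x ≠ 0}.Finite)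
    (h : ∀ x, γ x + ctxMul γ' G x ≤ γ' x) :
    ∀ x, ctxMul γ (gstar G) x ≤ γ' x := by
  have : IsOrderedAddMonoid R := { add_le_add_left := fun a b hab c => hadd a b c c hab le_rfl }
  have : MulRightMono R := ⟨fun c a b hab => hmul a b c c hab le_rfl⟩
  have hN := finite_nodes hG
  intro x
  have hvanish : ctxMul γ' (matPow G ((Nodes G).ncard + 1)) x = 0 := by
    simp [ctxMul, hacyc.matPow_eq_zero hN (Nat.lt_succ_self _)]
  calc ctxMul γ (gstar G) x
      = ∑ n ∈ range ((Nodes G).ncard + 1), ctxMul γ (matPow G n) x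
          + ctxMul γ' (matPow G ((Nodes G).ncard + 1)) x := by
        rw [hacyc.gstar_eq_sum_matPow hN, ctxMul_finset_sum hγ, hvanish, add_zero]
    _ ≤ γ' x := sum_ctxMul_matPow_add_ctxMul_matPow_le hN hγ hγ' h _ x

/-- For an acyclic grade graph `G` and grade contexts `γ, γ'`:
if `γ + γ'·G ≤ γ'` pointwise, then `γ·G* ≤ γ'` pointwise. -/
theorem gstar_le_of_prefixed_point {V R : Type*} [Semiring R] [PartialOrder R]
    (hadd : ∀ a b c d : R, a ≤ b → c ≤ d → a + c ≤ b + d)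
    (hmul : ∀ a b c d : R, a ≤ b → c ≤ d → a * c ≤ b * d)
    (hzero : ∀ r : R, r ≤ 0 → r = 0)
    (G : V → V → R) (hG : {q : V × V | G q.1 q.2 ≠ 0}.Finite)
    (hacyc : Acyclic G)
    (γ γ' : V → R) (hγ : {x | γ x ≠ 0}.Finite) (hγ' : {x | γ' x ≠ 0}.Finite)
    (h : ∀ x, γ x + ctxMul γ' G x ≤ γ' x) :
    ∀ x, ctxMul γ (gstar G) x ≤ γ' x :=
  gstar_le_of_prefixed_point_general hadd hmul G hG hacyc γ γ' hγ hγ' h
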